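/- Let A be a real d×d matrix whose eigenvalues all have strictly negative real part, and suppose u is a polynomial satisfying ⟨Ax, ∇u(x)⟩ + Tr(Q∇²u(x)) = γ u(x) for some γ ∈ ℂ and positive semidefinite Q. If u ≠ 0 then Re(γ) ≤ 0. -/

import Mathlib

open Finset MvPolynomial

/-!
Differentiating `L u = γ u` gives `L (∂ₖ u) = γ ∂ₖ u - ∑ᵢ Aᵢₖ ∂ᵢ u`, so `T c := ⟨c, ∇u⟩` satisfies
`L (T c) = T ((γ - A) c)`. Hence `ker T` is `A`-invariant, and if `∇u ≠ 0` an eigenvalue `μ` of `A`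
on `ℂᵈ ⧸ ker T` yields `c` with `T c ≠ 0` and `L (T c) = (γ - μ) T c`. As `T c` has lower degree
than `u`, induction gives `Re γ ≤ Re μ < 0`. When `∇u = 0` the equation reads `γ u = 0`, so `γ = 0`.
-/

namespace MvPolynomial

variable {σ R : Type*} [CommRing R]

theorem pderiv_pderiv_comm (i j : σ) (p : MvPolynomial σ R) :
    pderiv i (pderiv j p) = pderiv j (pderiv i p) := by
  classical
  have h : ⁅pderiv (R := R) i, pderiv j⁆ = 0 :=
    derivation_ext fun k => by
      rw [Derivation.commutator_apply, pderiv_X, pderiv_X]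
      simp only [Pi.single_apply]
      split_ifs <;> simp
  simpa [Derivation.commutator_apply, sub_eq_zero] using congr($h p)

theorem totalDegree_pderiv_le (i : σ) (p : MvPolynomial σ R) :
    (pderiv i p).totalDegree ≤ p.totalDegree - 1 := by
  refine Finset.sup_le fun m hm => ?_
  have hcoeff : coeff (m + Finsupp.single i 1) p ≠ 0 := by
    rw [mem_support_iff, coeff_pderiv] at hm
    exact left_ne_zero_of_mul hm
  have := le_totalDegree (mem_support_iff.mpr hcoeff)
  rw [Finsupp.sum_add_index' (fun _ => rfl) (fun _ _ _ => rfl), Finsupp.sum_single_index rfl] at this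
  omega

theorem pderiv_eq_zero_of_totalDegree_eq_zero (i : σ) {p : MvPolynomial σ R}
    (h : p.totalDegree = 0) : pderiv i p = 0 := by
  rw [totalDegree_eq_zero_iff_eq_C.mp h, pderiv_C]

theorem totalDegree_linearCombination_pderiv_le [Fintype σ] (u : MvPolynomial σ R) (c : σ → R) :
    (Fintype.linearCombination R (fun k => pderiv k u) c).totalDegree ≤ u.totalDegree - 1 := by
  rw [Fintype.linearCombination_apply]
  exact (totalDegree_finsetSum _ _).trans <| Finset.sup_le fun k _ =>
    (totalDegree_smul_le _ _).trans (totalDegree_pderiv_le k u)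

end MvPolynomial

theorem Module.End.exists_hasEigenvalue_sub_smul_mem {K V : Type*} [Field K] [IsAlgClosed K]
    [AddCommGroup V] [Module K V] [FiniteDimensional K V] (f : Module.End K V)
    {p : Submodule K V} (hp : p ≠ ⊤) (hfp : p ≤ p.comap f) :
    ∃ μ, f.HasEigenvalue μ ∧ ∃ v ∉ p, f v - μ • v ∈ p := by
  have : Nontrivial (V ⧸ p) := Submodule.Quotient.nontrivial_iff.mpr hp
  obtain ⟨μ, hμ⟩ := Module.End.exists_eigenvalue (p.mapQ p f hfp)
  obtain ⟨v', hv'⟩ := hμ.exists_hasEigenvector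
  obtain ⟨v, rfl⟩ := p.mkQ_surjective v'
  have hv : v ∉ p := by simpa using hv'.2
  have hfv : f v - μ • v ∈ p := (Submodule.Quotient.eq p).mp (by simpa using hv'.apply_eq_smul)
  refine ⟨μ, ?_, v, hv, hfv⟩
  by_contra hμf
  -- if `f - μ` were injective, it would map `p` onto itself, and `(f - μ) v ∈ p` would force `v ∈ p`
  set g := f - μ • 1
  have hg : Function.Injective g := by
    rw [← LinearMap.ker_eq_bot]
    simpa [Module.End.hasEigenvalue_iff, Module.End.eigenspace_def] using hμf
  have hgp : p ≤ p.comap g := fun x hx => p.sub_mem (hfp hx) (p.smul_mem μ hx)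
  have hsurj : Function.Surjective (g.restrict hgp) :=
    LinearMap.injective_iff_surjective.mp fun a b hab => Subtype.ext (hg congr($hab.1))
  obtain ⟨q, hq⟩ := hsurj ⟨g v, by simpa [g] using hfv⟩
  have : (q : V) = v := hg (by simpa using congr_arg Subtype.val hq)
  exact hv (this ▸ q.2)

namespace OrnsteinUhlenbeck

variable {ι R : Type*} [Fintype ι] [CommRing R]

-- `⟨Ax, ∇u⟩ + Tr(Q ∇²u)` on polynomials
noncomputable def operator (A Q : Matrix ι ι R) : Module.End R (MvPolynomial ι R) :=
  ∑ i, LinearMap.mulLeft R (∑ j, C (A i j) * X j) ∘ₗ (pderiv i).toLinearMap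
    + ∑ i, ∑ j, LinearMap.mulLeft R (C (Q i j)) ∘ₗ (pderiv i).toLinearMap ∘ₗ (pderiv j).toLinearMap

theorem operator_apply (A Q : Matrix ι ι R) (u : MvPolynomial ι R) :
    operator A Q u = ∑ i, (∑ j, C (A i j) * X j) * pderiv i u
      + ∑ i, ∑ j, C (Q i j) * pderiv i (pderiv j u) := by
  simp [operator]

theorem pderiv_operator (A Q : Matrix ι ι R) (k : ι) (u : MvPolynomial ι R) :
    pderiv k (operator A Q u) = operator A Q (pderiv k u) + ∑ i, A i k • pderiv i u := by
  classical
  have hdrift (i : ι) : pderiv k (∑ j, C (A i j) * X j) = C (A i k) := by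
    simp [pderiv_X, Pi.single_apply]
  simp only [operator_apply, map_add, map_sum, pderiv_mul, pderiv_C, zero_mul, zero_add, hdrift,
    pderiv_pderiv_comm k, smul_eq_C_mul, sum_add_distrib]
  ring

theorem operator_linearCombination_pderiv (A Q : Matrix ι ι R) {γ : R} {u : MvPolynomial ι R}
    (hu : operator A Q u = γ • u) (c : ι → R) :
    operator A Q (Fintype.linearCombination R (fun k => pderiv k u) c)
      = γ • Fintype.linearCombination R (fun k => pderiv k u) c
        - Fintype.linearCombination R (fun k => pderiv k u) (A.mulVec c) := by
  have hk (k : ι) : operator A Q (pderiv k u) = γ • pderiv k u - ∑ i, A i k • pderiv i u := by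
    rw [eq_sub_iff_add_eq, ← pderiv_operator, hu, Derivation.map_smul]
  simp only [Fintype.linearCombination_apply, map_sum, map_smul, hk, smul_sub, smul_sum,
    sum_sub_distrib, Matrix.mulVec, dotProduct, sum_smul, smul_smul]
  rw [sum_comm (s := univ) (t := univ)]
  simp only [mul_comm]

theorem re_nonpos_of_hasEigenvector [DecidableEq ι] {A : Matrix ι ι ℂ}
    (hA : ∀ μ ∈ spectrum ℂ A, μ.re < 0) (Q : Matrix ι ι ℂ) {γ : ℂ} {u : MvPolynomial ι ℂ}
    (hu : (operator A Q).HasEigenvector γ u) : γ.re ≤ 0 := by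
  induction hn : u.totalDegree using Nat.strong_induction_on generalizing u γ with
  | _ n ih =>
  have hLu : operator A Q u = γ • u := hu.apply_eq_smul
  by_cases hgrad : ∀ k, pderiv k u = 0
  · have : γ • u = 0 := by simp [← hLu, operator_apply, hgrad]
    simp [(smul_eq_zero_iff_left hu.2).mp this]
  push Not at hgrad
  obtain ⟨k, hk⟩ := hgrad
  set T := Fintype.linearCombination ℂ (fun k => pderiv k u)
  have hT (c : ι → ℂ) : operator A Q (T c) = γ • T c - T (A.mulVec c) :=
    operator_linearCombination_pderiv A Q hLu c
  have hker : LinearMap.ker T ≠ ⊤ := fun h => hk <| by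
    simpa [T] using LinearMap.congr_fun (LinearMap.ker_eq_top.mp h) (Pi.single k 1)
  have hinv : LinearMap.ker T ≤ (LinearMap.ker T).comap (Matrix.toLin' A) := fun c hc => by
    rw [LinearMap.mem_ker] at hc
    simpa [hc] using hT c
  obtain ⟨μ, hμ, c, hc, hcμ⟩ :=
    Module.End.exists_hasEigenvalue_sub_smul_mem (Matrix.toLin' A) hker hinv
  have hμA : μ.re < 0 := hA μ (by simpa using hμ.mem_spectrum)
  have hw : (operator A Q).HasEigenvector (γ - μ) (T c) := by
    refine ⟨Module.End.mem_eigenspace_iff.mpr ?_, hc⟩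
    have : T (A.mulVec c) = μ • T c := by
      simpa [sub_eq_zero] using hcμ
    rw [hT, this, sub_smul]
  have hdeg : (T c).totalDegree < n := by
    have hn0 : n ≠ 0 := fun h => hk (pderiv_eq_zero_of_totalDegree_eq_zero k (hn.trans h))
    have : (T c).totalDegree ≤ u.totalDegree - 1 := totalDegree_linearCombination_pderiv_le u c
    omega
  have := ih _ hdeg hw rfl
  rw [Complex.sub_re] at this
  linarith

end OrnsteinUhlenbeck

theorem stmt7_general {d : ℕ} (A : Matrix (Fin d) (Fin d) ℝ)
    (hA : ∀ μ ∈ spectrum ℂ (A.map (fun a => (a : ℂ))), μ.re < 0)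
    (Q : Matrix (Fin d) (Fin d) ℝ)
    (u : MvPolynomial (Fin d) ℂ) (γ : ℂ)
    (heq : (∑ i, (∑ j, C ((A i j : ℝ) : ℂ) * X j) * pderiv i u)
        + (∑ i, ∑ j, C ((Q i j : ℝ) : ℂ) * pderiv i (pderiv j u))
      = C γ * u)
    (hu : u ≠ 0) : γ.re ≤ 0 := by
  have hLu : OrnsteinUhlenbeck.operator (A.map (↑)) (Q.map (↑)) u = γ • u := by
    rw [smul_eq_C_mul, ← heq, OrnsteinUhlenbeck.operator_apply]
    rfl
  exact OrnsteinUhlenbeck.re_nonpos_of_hasEigenvector hA _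
    ⟨Module.End.mem_eigenspace_iff.mpr hLu, hu⟩

/-- Let `A` be a real `d×d` matrix whose (complex) eigenvalues all have strictly negative
real part, `Q` positive semidefinite, and `u` a polynomial (over `ℂ`) satisfying
`⟨Ax, ∇u⟩ + Tr(Q ∇²u) = γ u` as a polynomial identity. If `u ≠ 0` then `Re γ ≤ 0`. -/
theorem stmt7 {d : ℕ} (A : Matrix (Fin d) (Fin d) ℝ)
    (hA : ∀ μ ∈ spectrum ℂ (A.map (fun a => (a : ℂ))), μ.re < 0)
    (Q : Matrix (Fin d) (Fin d) ℝ) (hQ : Q.PosSemidef)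
    (u : MvPolynomial (Fin d) ℂ) (γ : ℂ)
    (heq : (∑ i, (∑ j, C ((A i j : ℝ) : ℂ) * X j) * pderiv i u)
        + (∑ i, ∑ j, C ((Q i j : ℝ) : ℂ) * pderiv i (pderiv j u))
      = C γ * u)
    (hu : u ≠ 0) : γ.re ≤ 0 :=
  stmt7_general A hA Q u γ heq hu
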